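/- Let X = (X₁,…,X_d) be a random vector whose joint distribution function F is a MEV distribution with unit Fréchet marginals, and let I₁, I₂ be disjoint non-empty subsets of {1,…,d}. Then for all x, y > 0, lim_{t→∞} t · P( M(I₁) > 1 − x/t or M(I₂) > 1 − y/t ) = l^{(I₁,I₂)}(x^{-1}, y^{-1}); that is, l^{(I₁,I₂)}(x^{-1},y^{-1}) equals the bivariate stable tail dependence function of the pair (M(I₁), M(I₂)) evaluated at (x,y). -/

import Mathlib

open MeasureTheory Filter Finset

/-- The joint distribution function of the random vector `X` under `μ`. -/
noncomputable def jointCDF {Ω : Type*} [MeasurableSpace Ω] (μ : Measure Ω) {d : ℕ}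
    (X : Fin d → Ω → ℝ) (x : Fin d → ℝ) : ℝ :=
  (μ {ω | ∀ i, X i ω ≤ x i}).toReal

/-- The marginal distribution function of the `i`-th coordinate of `X` under `μ`. -/
noncomputable def margCDF {Ω : Type*} [MeasurableSpace Ω] (μ : Measure Ω) {d : ℕ}
    (X : Fin d → Ω → ℝ) (i : Fin d) (u : ℝ) : ℝ :=
  (μ {ω | X i ω ≤ u}).toReal

/-- `l^{(I₁,I₂)}(x,y) = -log F(a₁,…,a_d)` where `aᵢ = x` on `I₁`, `aᵢ = y` on `I₂` and
`aᵢ = ∞` otherwise (taking the limit of `F` in those arguments, i.e. dropping the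
corresponding constraints). -/
noncomputable def mevL {Ω : Type*} [MeasurableSpace Ω] (μ : Measure Ω) {d : ℕ}
    (X : Fin d → Ω → ℝ) (I₁ I₂ : Finset (Fin d)) (x y : ℝ) : ℝ :=
  -Real.log (μ {ω | (∀ i ∈ I₁, X i ω ≤ x) ∧ (∀ j ∈ I₂, X j ω ≤ y)}).toReal

/-- The extremal coefficient `ε_I = l^{(I,∅)}(1,1)` of the sub-vector `X_I`. -/
noncomputable def extCoef {Ω : Type*} [MeasurableSpace Ω] (μ : Measure Ω) {d : ℕ}
    (X : Fin d → Ω → ℝ) (I : Finset (Fin d)) : ℝ :=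
  mevL μ X I ∅ 1 1

/-- `M(I) = max_{i ∈ I} F_i(X_i)`. -/
noncomputable def Msub {Ω : Type*} [MeasurableSpace Ω] (μ : Measure Ω) {d : ℕ}
    (X : Fin d → Ω → ℝ) (I : Finset (Fin d)) (hI : I.Nonempty) (ω : Ω) : ℝ :=
  I.sup' hI fun i => margCDF μ X i (X i ω)

/-- The stable tail dependence function `l(x₁,…,x_d) = -log F(x₁,…,x_d)`. -/
noncomputable def stdf {Ω : Type*} [MeasurableSpace Ω] (μ : Measure Ω) {d : ℕ}
    (X : Fin d → Ω → ℝ) (x : Fin d → ℝ) : ℝ :=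
  -Real.log (jointCDF μ X x)

/-- `X` has a multivariate extreme value (max-stable) distribution with unit Fréchet
marginals under the probability measure `μ`. -/
structure IsMEVFrechet {Ω : Type*} [MeasurableSpace Ω] (μ : Measure Ω) {d : ℕ}
    (X : Fin d → Ω → ℝ) : Prop where
  meas : ∀ i, Measurable (X i)
  frechet : ∀ i, ∀ u : ℝ, 0 < u → margCDF μ X i u = Real.exp (-u⁻¹)
  maxStable : ∀ t : ℝ, 0 < t → ∀ x : Fin d → ℝ, (∀ i, 0 < x i) →
    jointCDF μ X (fun i => t * x i) ^ t = jointCDF μ X x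

/-! The event is the complement of `{Xᵢ ≤ uₜ on I₁, Xⱼ ≤ vₜ on I₂}` with
`uₜ = (-log (1 - x/t))⁻¹`, so its probability is `1 - G(uₜ, vₜ)` for the joint distribution
function `G` of the two block maxima. Max-stability gives `G(s a, s b)^s = G(a, b)`, hence
`G(uₜ, vₜ) = exp(-ℓ(pₜ, qₜ)/t)` with `ℓ(a, b) = l^{(I₁,I₂)}(a⁻¹, b⁻¹)` and
`pₜ = t·(-log (1 - x/t)) → x`. Being monotone and homogeneous of degree one, `ℓ` is continuous,
and `t (1 - exp(-B/t)) → B` as `t → ∞`. -/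

open Topology

lemma tendsto_of_monotone_of_homogeneous {ℓ : ℝ → ℝ → ℝ}
    (hmono : ∀ ⦃a b a' b' : ℝ⦄, 0 < a → 0 < b → a ≤ a' → b ≤ b' → ℓ a b ≤ ℓ a' b')
    (hhom : ∀ ⦃c a b : ℝ⦄, 0 < c → 0 < a → 0 < b → ℓ (c * a) (c * b) = c * ℓ a b)
    {x y : ℝ} (hx : 0 < x) (hy : 0 < y) {α : Type*} {l : Filter α} {p q : α → ℝ}
    (hp : Tendsto p l (𝓝 x)) (hq : Tendsto q l (𝓝 y)) :
    Tendsto (fun t => ℓ (p t) (q t)) l (𝓝 (ℓ x y)) := by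
  set r := fun t => min (p t / x) (q t / y)
  set R := fun t => max (p t / x) (q t / y)
  have hr : Tendsto r l (𝓝 1) := by
    simpa [hx.ne', hy.ne'] using (hp.div_const x).min (hq.div_const y)
  have hR : Tendsto R l (𝓝 1) := by
    simpa [hx.ne', hy.ne'] using (hp.div_const x).max (hq.div_const y)
  have hlower : ∀ᶠ t in l, r t * ℓ x y ≤ ℓ (p t) (q t) := by
    filter_upwards [hr.eventually (lt_mem_nhds one_pos)] with t hrt
    rw [← hhom hrt hx hy]
    exact hmono (mul_pos hrt hx) (mul_pos hrt hy)
      ((le_div_iff₀ hx).1 (min_le_left _ _)) ((le_div_iff₀ hy).1 (min_le_right _ _))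
  have hupper : ∀ᶠ t in l, ℓ (p t) (q t) ≤ R t * ℓ x y := by
    filter_upwards [hp.eventually (lt_mem_nhds hx), hq.eventually (lt_mem_nhds hy),
      hR.eventually (lt_mem_nhds one_pos)] with t hpt hqt hRt
    rw [← hhom hRt hx hy]
    exact hmono hpt hqt
      ((div_le_iff₀ hx).1 (le_max_left _ _)) ((div_le_iff₀ hy).1 (le_max_right _ _))
  refine tendsto_of_tendsto_of_tendsto_of_le_of_le' ?_ ?_ hlower hupper
  · simpa using hr.mul_const (ℓ x y)
  · simpa using hR.mul_const (ℓ x y)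

lemma tendsto_mul_neg_log_one_sub_div (x : ℝ) :
    Tendsto (fun t => t * -Real.log (1 - x / t)) atTop (𝓝 x) := by
  simpa [sub_eq_add_neg, neg_div] using (Real.tendsto_mul_log_one_add_div_atTop (-x)).neg

/-- `t (1 - e^{-B/t}) = B + O(B² / t)`. -/
lemma tendsto_mul_one_sub_exp_neg_div {B : ℝ → ℝ} {L : ℝ} (hB : Tendsto B atTop (𝓝 L)) :
    Tendsto (fun t => t * (1 - Real.exp (-B t / t))) atTop (𝓝 L) := by
  have hsmall : Tendsto (fun t => B t / t) atTop (𝓝 0) := hB.div_atTop tendsto_id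
  have herr : Tendsto (fun t => t * (1 - Real.exp (-B t / t)) - B t) atTop (𝓝 0) := by
    refine squeeze_zero_norm' ?_ ((hB.pow 2).div_atTop tendsto_id)
    filter_upwards [eventually_gt_atTop 0, hsmall.eventually (Metric.ball_mem_nhds 0 one_pos)]
      with t ht hBt
    have hBt' : |-B t / t| ≤ 1 := by
      rw [neg_div, abs_neg, ← sub_zero (B t / t), ← Real.dist_eq]
      exact hBt.le
    have hexp := Real.abs_exp_sub_one_sub_id_le hBt'
    have hrw : t * (1 - Real.exp (-B t / t)) - B t
        = -(t * (Real.exp (-B t / t) - 1 - -B t / t)) := by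
      field_simp
      ring
    calc ‖t * (1 - Real.exp (-B t / t)) - B t‖ = t * |Real.exp (-B t / t) - 1 - -B t / t| := by
          rw [hrw, norm_neg, norm_mul, Real.norm_eq_abs, Real.norm_eq_abs, abs_of_pos ht]
      _ ≤ t * (-B t / t) ^ 2 := mul_le_mul_of_nonneg_left hexp ht.le
      _ = B t ^ 2 / t := by field_simp
  simpa using herr.add hB

lemma one_sub_div_eq_exp_neg_inv {x t : ℝ} (hxt : x < t) (ht : 0 < t) :
    1 - x / t = Real.exp (-(t * (t * -Real.log (1 - x / t))⁻¹)⁻¹) := by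
  rw [mul_inv_rev, inv_inv, mul_comm t, mul_inv_cancel_right₀ ht.ne', neg_neg,
    Real.exp_log (sub_pos.2 ((div_lt_one ht).2 hxt))]

section MaxStable

variable {Ω : Type*} [MeasurableSpace Ω] {μ : Measure Ω} {d : ℕ} {X : Fin d → Ω → ℝ}

noncomputable def partialCDF (μ : Measure Ω) (X : Fin d → Ω → ℝ) (S : Finset (Fin d))
    (x : Fin d → ℝ) : ℝ :=
  (μ {ω | ∀ i ∈ S, X i ω ≤ x i}).toReal

noncomputable def blockCDF (μ : Measure Ω) (X : Fin d → Ω → ℝ) (I₁ I₂ : Finset (Fin d))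
    (a b : ℝ) : ℝ :=
  (μ {ω | (∀ i ∈ I₁, X i ω ≤ a) ∧ ∀ j ∈ I₂, X j ω ≤ b}).toReal

lemma mevL_eq_neg_log_blockCDF (I₁ I₂ : Finset (Fin d)) (a b : ℝ) :
    mevL μ X I₁ I₂ a b = -Real.log (blockCDF μ X I₁ I₂ a b) :=
  rfl

lemma blockCDF_eq_partialCDF (I₁ I₂ : Finset (Fin d)) (hdisj : Disjoint I₁ I₂) (a b : ℝ) :
    blockCDF μ X I₁ I₂ a b =
      partialCDF μ X (I₁ ∪ I₂) (I₁.piecewise (fun _ => a) fun _ => b) := by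
  unfold blockCDF partialCDF
  congr 2
  ext ω
  simp only [Set.mem_ofPred_eq, Finset.mem_union, or_imp, forall_and]
  refine and_congr (forall₂_congr fun i hi => by simp [hi])
    (forall₂_congr fun j hj => by simp [Finset.disjoint_right.1 hdisj hj])

variable [IsFiniteMeasure μ]

lemma tendsto_jointCDF_piecewise (S : Finset (Fin d)) (x : Fin d → ℝ) :
    Tendsto (fun r : ℝ => jointCDF μ X (S.piecewise x fun _ => r)) atTop
      (𝓝 (partialCDF μ X S x)) := by
  have hmono : Monotone fun r : ℝ => {ω | ∀ i, X i ω ≤ S.piecewise x (fun _ => r) i} :=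
    fun r r' hrr' ω hω i => (hω i).trans (S.piecewise_le_piecewise le_rfl (fun _ => hrr') i)
  have hunion : (⋃ r : ℝ, {ω | ∀ i, X i ω ≤ S.piecewise x (fun _ => r) i})
      = {ω | ∀ i ∈ S, X i ω ≤ x i} := by
    ext ω
    simp only [Set.mem_iUnion, Set.mem_ofPred_eq]
    constructor
    · rintro ⟨r, hr⟩ i hi
      simpa [S.piecewise_eq_of_mem _ _ hi] using hr i
    · intro hS
      obtain ⟨M, hM⟩ := (Set.finite_range fun i => X i ω).bddAbove
      refine ⟨M, fun i => ?_⟩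
      by_cases hi : i ∈ S
      · simpa [S.piecewise_eq_of_mem _ _ hi] using hS i hi
      · simpa [S.piecewise_eq_of_notMem _ _ hi] using hM ⟨i, rfl⟩
  have h := tendsto_measure_iUnion_atTop (μ := μ) hmono
  rw [hunion] at h
  exact (ENNReal.tendsto_toReal (measure_ne_top μ _)).comp h

lemma blockCDF_mono (I₁ I₂ : Finset (Fin d)) {a a' b b' : ℝ} (ha : a ≤ a') (hb : b ≤ b') :
    blockCDF μ X I₁ I₂ a b ≤ blockCDF μ X I₁ I₂ a' b' :=
  ENNReal.toReal_mono (measure_ne_top μ _) (measure_mono fun _ hω =>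
    ⟨fun i hi => (hω.1 i hi).trans ha, fun j hj => (hω.2 j hj).trans hb⟩)

/-- Let the coordinates outside `S` tend to `∞` in the max-stability of the full vector. -/
lemma partialCDF_mul_rpow (hX : IsMEVFrechet μ X) (S : Finset (Fin d)) {x : Fin d → ℝ}
    (hx : ∀ i ∈ S, 0 < x i) {s : ℝ} (hs : 0 < s) :
    partialCDF μ X S (fun i => s * x i) ^ s = partialCDF μ X S x := by
  have hscaled : Tendsto
      (fun r : ℝ => jointCDF μ X (fun i => s * S.piecewise x (fun _ => r) i) ^ s) atTop
      (𝓝 (partialCDF μ X S (fun i => s * x i) ^ s)) := by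
    have h := (tendsto_jointCDF_piecewise (μ := μ) (X := X) S (fun i => s * x i)).comp
      (tendsto_id.const_mul_atTop hs)
    refine ((Real.continuousAt_rpow_const _ s (Or.inr hs.le)).tendsto.comp h).congr fun r => ?_
    simp only [Function.comp_apply, id]
    congr 2
    ext i
    by_cases hi : i ∈ S <;> simp [hi]
  refine tendsto_nhds_unique (hscaled.congr' ?_) (tendsto_jointCDF_piecewise S x)
  filter_upwards [eventually_gt_atTop 0] with r hr
  refine hX.maxStable s hs _ fun i => ?_
  by_cases hi : i ∈ S
  · simpa [hi] using hx i hi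
  · simpa [hi] using hr

lemma margCDF_le_exp_neg_inv_iff (hX : IsMEVFrechet μ X) (i : Fin d) {u : ℝ} (hu : 0 < u)
    (v : ℝ) : margCDF μ X i v ≤ Real.exp (-u⁻¹) ↔ v ≤ u := by
  rw [← hX.frechet i u hu]
  refine ⟨fun h => ?_, fun h => ENNReal.toReal_mono (measure_ne_top μ _)
    (measure_mono fun _ hω => le_trans hω h)⟩
  by_contra! huv
  rw [hX.frechet i u hu, hX.frechet i v (hu.trans huv)] at h
  exact (Real.exp_lt_exp.2 (neg_lt_neg (inv_strictAnti₀ hu huv))).not_ge h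

lemma Msub_le_exp_neg_inv_iff (hX : IsMEVFrechet μ X) {I : Finset (Fin d)} (hI : I.Nonempty)
    {u : ℝ} (hu : 0 < u) (ω : Ω) :
    Msub μ X I hI ω ≤ Real.exp (-u⁻¹) ↔ ∀ i ∈ I, X i ω ≤ u := by
  rw [Msub, Finset.sup'_le_iff]
  exact forall₂_congr fun i _ => margCDF_le_exp_neg_inv_iff hX i hu _

variable [IsProbabilityMeasure μ]

lemma partialCDF_pos (hX : IsMEVFrechet μ X) (S : Finset (Fin d)) {x : Fin d → ℝ}
    (hx : ∀ i ∈ S, 0 < x i) : 0 < partialCDF μ X S x := by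
  -- `F_S(x) = F_S((n + 1) x) ^ (n + 1)`, and the events `{X_S ≤ (n + 1) x}` exhaust `Ω`.
  have hunion : (⋃ n : ℕ, {ω | ∀ i ∈ S, X i ω ≤ ((n : ℝ) + 1) * x i}) = Set.univ := by
    refine Set.eq_univ_of_forall fun ω => Set.mem_iUnion.2 ?_
    refine ((Filter.eventually_all_finset (l := atTop) S).2 fun i hi => ?_).exists
    exact tendsto_atTop.1 ((tendsto_natCast_atTop_atTop.atTop_add
      tendsto_const_nhds).atTop_mul_const (hx i hi)) (X i ω)
  obtain ⟨n, hn⟩ : ∃ n : ℕ, μ {ω | ∀ i ∈ S, X i ω ≤ ((n : ℝ) + 1) * x i} ≠ 0 := by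
    by_contra! h
    simpa [hunion] using measure_iUnion_null_iff.2 h
  rw [← partialCDF_mul_rpow hX S hx (by positivity : (0 : ℝ) < n + 1)]
  exact Real.rpow_pos_of_pos (ENNReal.toReal_pos hn (measure_ne_top μ _)) _

lemma blockCDF_pos (hX : IsMEVFrechet μ X) {I₁ I₂ : Finset (Fin d)} (hdisj : Disjoint I₁ I₂)
    {a b : ℝ} (ha : 0 < a) (hb : 0 < b) : 0 < blockCDF μ X I₁ I₂ a b := by
  rw [blockCDF_eq_partialCDF I₁ I₂ hdisj]
  refine partialCDF_pos hX _ fun i _ => ?_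
  by_cases hi : i ∈ I₁ <;> simp [hi, ha, hb]

lemma mevL_mul (hX : IsMEVFrechet μ X) {I₁ I₂ : Finset (Fin d)} (hdisj : Disjoint I₁ I₂)
    {s a b : ℝ} (hs : 0 < s) (ha : 0 < a) (hb : 0 < b) :
    mevL μ X I₁ I₂ (s * a) (s * b) = s⁻¹ * mevL μ X I₁ I₂ a b := by
  have hrpow : blockCDF μ X I₁ I₂ (s * a) (s * b) ^ s = blockCDF μ X I₁ I₂ a b := by
    simp only [blockCDF_eq_partialCDF I₁ I₂ hdisj]
    convert partialCDF_mul_rpow hX (I₁ ∪ I₂) (x := I₁.piecewise (fun _ => a) fun _ => b)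
      (fun i _ => by by_cases hi : i ∈ I₁ <;> simp [hi, ha, hb]) hs using 3
    ext i
    by_cases hi : i ∈ I₁ <;> simp [hi]
  have hlog := congrArg Real.log hrpow
  rw [Real.log_rpow (blockCDF_pos hX hdisj (mul_pos hs ha) (mul_pos hs hb))] at hlog
  rw [mevL_eq_neg_log_blockCDF, mevL_eq_neg_log_blockCDF, ← hlog]
  field_simp

lemma mevL_inv_mul (hX : IsMEVFrechet μ X) {I₁ I₂ : Finset (Fin d)} (hdisj : Disjoint I₁ I₂)
    {c a b : ℝ} (hc : 0 < c) (ha : 0 < a) (hb : 0 < b) :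
    mevL μ X I₁ I₂ (c * a)⁻¹ (c * b)⁻¹ = c * mevL μ X I₁ I₂ a⁻¹ b⁻¹ := by
  rw [mul_inv, mul_inv, mevL_mul hX hdisj (inv_pos.2 hc) (inv_pos.2 ha) (inv_pos.2 hb), inv_inv]

lemma mevL_inv_mono (hX : IsMEVFrechet μ X) {I₁ I₂ : Finset (Fin d)} (hdisj : Disjoint I₁ I₂)
    {a b a' b' : ℝ} (ha : 0 < a) (hb : 0 < b) (haa' : a ≤ a') (hbb' : b ≤ b') :
    mevL μ X I₁ I₂ a⁻¹ b⁻¹ ≤ mevL μ X I₁ I₂ a'⁻¹ b'⁻¹ :=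
  neg_le_neg (Real.log_le_log
    (blockCDF_pos hX hdisj (inv_pos.2 (ha.trans_le haa')) (inv_pos.2 (hb.trans_le hbb')))
    (blockCDF_mono I₁ I₂ (inv_anti₀ ha haa') (inv_anti₀ hb hbb')))

lemma blockCDF_mul_eq_exp (hX : IsMEVFrechet μ X) {I₁ I₂ : Finset (Fin d)}
    (hdisj : Disjoint I₁ I₂) {t a b : ℝ} (ht : 0 < t) (ha : 0 < a) (hb : 0 < b) :
    blockCDF μ X I₁ I₂ (t * a) (t * b) = Real.exp (-mevL μ X I₁ I₂ a b / t) := by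
  have hmevL := mevL_mul hX hdisj ht ha hb
  rw [mevL_eq_neg_log_blockCDF] at hmevL
  rw [neg_div, div_eq_inv_mul, ← hmevL, neg_neg,
    Real.exp_log (blockCDF_pos hX hdisj (mul_pos ht ha) (mul_pos ht hb))]

lemma measure_exp_neg_inv_lt_Msub_or (hX : IsMEVFrechet μ X) {I₁ I₂ : Finset (Fin d)}
    (h1 : I₁.Nonempty) (h2 : I₂.Nonempty) {a b : ℝ} (ha : 0 < a) (hb : 0 < b) :
    (μ {ω | Real.exp (-a⁻¹) < Msub μ X I₁ h1 ω ∨ Real.exp (-b⁻¹) < Msub μ X I₂ h2 ω}).toReal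
      = 1 - blockCDF μ X I₁ I₂ a b := by
  have hset : {ω | Real.exp (-a⁻¹) < Msub μ X I₁ h1 ω ∨ Real.exp (-b⁻¹) < Msub μ X I₂ h2 ω}
      = {ω | (∀ i ∈ I₁, X i ω ≤ a) ∧ ∀ j ∈ I₂, X j ω ≤ b}ᶜ := by
    ext ω
    simp only [Set.mem_ofPred_eq, Set.mem_compl_iff, ← Msub_le_exp_neg_inv_iff hX h1 ha,
      ← Msub_le_exp_neg_inv_iff hX h2 hb, not_and_or, not_le]
  have hmeas : MeasurableSet {ω | (∀ i ∈ I₁, X i ω ≤ a) ∧ ∀ j ∈ I₂, X j ω ≤ b} := by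
    simp only [Set.ofPred_and, Set.ofPred_forall]
    exact (MeasurableSet.iInter fun i => MeasurableSet.iInter fun _ =>
      measurableSet_le (hX.meas i) measurable_const).inter
      (MeasurableSet.iInter fun j => MeasurableSet.iInter fun _ =>
      measurableSet_le (hX.meas j) measurable_const)
  rw [hset, prob_compl_eq_one_sub hmeas,
    ENNReal.toReal_sub_of_le prob_le_one ENNReal.one_ne_top, ENNReal.toReal_one, blockCDF]

end MaxStable

/-- For a MEV distribution with unit Fréchet marginals,
`lim_{t→∞} t·P(M(I₁) > 1 - x/t ∨ M(I₂) > 1 - y/t) = l^{(I₁,I₂)}(x⁻¹,y⁻¹)`, i.e.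
`l^{(I₁,I₂)}(x⁻¹,y⁻¹)` is the bivariate stable tail dependence function of
`(M(I₁), M(I₂))` at `(x,y)`. -/
theorem statement2 {Ω : Type*} [MeasurableSpace Ω] (μ : Measure Ω) [IsProbabilityMeasure μ]
    {d : ℕ} (X : Fin d → Ω → ℝ) (hX : IsMEVFrechet μ X)
    (I₁ I₂ : Finset (Fin d)) (h1 : I₁.Nonempty) (h2 : I₂.Nonempty) (hdisj : Disjoint I₁ I₂)
    (x y : ℝ) (hx : 0 < x) (hy : 0 < y) :
    Tendsto
      (fun t : ℝ =>
        t * (μ {ω | 1 - x / t < Msub μ X I₁ h1 ω ∨ 1 - y / t < Msub μ X I₂ h2 ω}).toReal)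
      atTop (nhds (mevL μ X I₁ I₂ x⁻¹ y⁻¹)) := by
  have hp := tendsto_mul_neg_log_one_sub_div x
  have hq := tendsto_mul_neg_log_one_sub_div y
  have hmevL : Tendsto (fun t => mevL μ X I₁ I₂ (t * -Real.log (1 - x / t))⁻¹
      (t * -Real.log (1 - y / t))⁻¹) atTop (nhds (mevL μ X I₁ I₂ x⁻¹ y⁻¹)) :=
    tendsto_of_monotone_of_homogeneous (ℓ := fun a b => mevL μ X I₁ I₂ a⁻¹ b⁻¹)
      (fun _ _ _ _ => mevL_inv_mono hX hdisj) (fun _ _ _ => mevL_inv_mul hX hdisj) hx hy hp hq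
  refine (tendsto_mul_one_sub_exp_neg_div hmevL).congr' ?_
  filter_upwards [eventually_gt_atTop x, eventually_gt_atTop y,
    hp.eventually (lt_mem_nhds hx), hq.eventually (lt_mem_nhds hy)] with t hxt hyt hpt hqt
  have ht : 0 < t := hx.trans hxt
  conv_rhs => rw [one_sub_div_eq_exp_neg_inv hxt ht, one_sub_div_eq_exp_neg_inv hyt ht,
    measure_exp_neg_inv_lt_Msub_or hX h1 h2 (mul_pos ht (inv_pos.2 hpt))
      (mul_pos ht (inv_pos.2 hqt)),
    blockCDF_mul_eq_exp hX hdisj ht (inv_pos.2 hpt) (inv_pos.2 hqt)]
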